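/- Let g₀(t) := (√2/π)·sin(πt) for t ∈ [0,1], and let R₀(s,t) := min(s,t) − g₀(s)g₀(t). Then λ = 1/π² is not an eigenvalue of the integral operator A_{R₀}: there is no continuous function e : [0,1] → ℝ, not identically zero, with ∫₀¹ R₀(t,s) e(s) ds = (1/π²)·e(t) for all t ∈ [0,1]. -/

import Mathlib

/-!
Let `e` be an eigenfunction for `1/π²` and `c = ∫₀¹ g₀ e`. The potential
`u(t) = ∫₀¹ min(t,s) e(s) ds` satisfies `u'' = -e`, `u(0) = 0`, `u'(1) = 0`, so `e = π² (u - c g₀)`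
solves `e'' + π² e = π⁴ c g₀` with `e(0) = 0` and `e'(1) = √2 π² c`. The forcing is resonant, so by
uniqueness for the harmonic oscillator (an energy argument) `e = B sin(πt) + C t cos(πt)` with
`C = -√2 π² c / 2`, and the condition at `t = 1` forces `C = π B`. Computing `c = ∫₀¹ g₀ e` for
this function gives `c = √2 B / (4π)`, which together with `π B = -√2 π² c / 2` yields `B = 0`.
-/

open Real Set intervalIntegral

/-- `g₀(t) = (√2/π) sin(π t)`. -/
noncomputable def gZero (t : ℝ) : ℝ := Real.sqrt 2 / Real.pi * Real.sin (Real.pi * t)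

/-- `R₀(s,t) = min(s,t) - g₀(s) g₀(t)`. -/
noncomputable def RZero (s t : ℝ) : ℝ := min s t - gZero s * gZero t

lemma hasDerivAt_sin_mul (ω t : ℝ) :
    HasDerivAt (fun t => sin (ω * t)) (ω * cos (ω * t)) t := by
  simpa [mul_comm] using ((hasDerivAt_id t).const_mul ω).sin

lemma hasDerivAt_cos_mul (ω t : ℝ) :
    HasDerivAt (fun t => cos (ω * t)) (-(ω * sin (ω * t))) t := by
  simpa [mul_comm] using ((hasDerivAt_id t).const_mul ω).cos

/-- Energy argument: `h' ^ 2 + k * h ^ 2` is constant along solutions of `h'' = -k h`. -/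
theorem eqOn_zero_of_hasDerivAt_neg_mul {k a b : ℝ} {h h' : ℝ → ℝ} (hk : 0 < k)
    (hh : ∀ t ∈ Icc a b, HasDerivAt h (h' t) t)
    (hh' : ∀ t ∈ Icc a b, HasDerivAt h' (-(k * h t)) t) (ha : h a = 0) (ha' : h' a = 0) :
    EqOn h 0 (Icc a b) ∧ EqOn h' 0 (Icc a b) := by
  set energy : ℝ → ℝ := fun t => h' t ^ 2 + k * h t ^ 2
  have henergy : ∀ t ∈ Icc a b, HasDerivAt energy 0 t := fun t ht => by
    refine (((hh' t ht).fun_pow 2).add (((hh t ht).fun_pow 2).const_mul k)).congr_deriv ?_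
    simp only [Nat.cast_ofNat, Nat.add_one_sub_one, pow_one]
    ring
  have hzero : ∀ t ∈ Icc a b, energy t = 0 := fun t ht => by
    rw [constant_of_has_deriv_right_zero
      (fun t ht => (henergy t ht).continuousAt.continuousWithinAt)
      (fun t ht => (henergy t (Ico_subset_Icc_self ht)).hasDerivWithinAt) t ht]
    simp [energy, ha, ha']
  have hsplit : ∀ t ∈ Icc a b, h' t ^ 2 = 0 ∧ k * h t ^ 2 = 0 := fun t ht =>
    (add_eq_zero_iff_of_nonneg (sq_nonneg _) (by positivity)).1 (hzero t ht)
  exact ⟨fun t ht => by simpa [hk.ne'] using (hsplit t ht).2,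
    fun t ht => by simpa using (hsplit t ht).1⟩

/-- The solutions of `y'' + ω ^ 2 y = -2 ω C sin (ω t)`: the forcing is at the resonant frequency,
so the particular solution is `C t cos (ω t)`. -/
noncomputable def resonantSolution (ω A B C t : ℝ) : ℝ :=
  A * cos (ω * t) + B * sin (ω * t) + C * t * cos (ω * t)

noncomputable def resonantSolutionDeriv (ω A B C t : ℝ) : ℝ :=
  ω * (B * cos (ω * t) - A * sin (ω * t)) + C * (cos (ω * t) - ω * t * sin (ω * t))

lemma hasDerivAt_resonantSolution (ω A B C t : ℝ) :
    HasDerivAt (resonantSolution ω A B C) (resonantSolutionDeriv ω A B C t) t := by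
  have := (((hasDerivAt_cos_mul ω t).const_mul A).add ((hasDerivAt_sin_mul ω t).const_mul B)).add
    (((hasDerivAt_id t).const_mul C).mul (hasDerivAt_cos_mul ω t))
  refine this.congr_deriv ?_
  simp only [resonantSolutionDeriv, id]
  ring

lemma hasDerivAt_resonantSolutionDeriv (ω A B C t : ℝ) :
    HasDerivAt (resonantSolutionDeriv ω A B C)
      (-(ω ^ 2 * resonantSolution ω A B C t) - 2 * ω * C * sin (ω * t)) t := by
  have := ((((hasDerivAt_cos_mul ω t).const_mul B).sub
      ((hasDerivAt_sin_mul ω t).const_mul A)).const_mul ω).add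
    (((hasDerivAt_cos_mul ω t).sub
      (((hasDerivAt_id t).const_mul ω).mul (hasDerivAt_sin_mul ω t))).const_mul C)
  refine this.congr_deriv ?_
  simp only [resonantSolution, id]
  ring

theorem eqOn_resonantSolution {ω b C : ℝ} (hω : ω ≠ 0) {φ φ' : ℝ → ℝ}
    (hφ : ∀ t ∈ Icc 0 b, HasDerivAt φ (φ' t) t)
    (hφ' : ∀ t ∈ Icc 0 b, HasDerivAt φ' (-(ω ^ 2 * φ t) - 2 * ω * C * sin (ω * t)) t) :
    EqOn φ (resonantSolution ω (φ 0) ((φ' 0 - C) / ω) C) (Icc 0 b) ∧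
      EqOn φ' (resonantSolutionDeriv ω (φ 0) ((φ' 0 - C) / ω) C) (Icc 0 b) := by
  set B := (φ' 0 - C) / ω
  obtain ⟨h, h'⟩ := eqOn_zero_of_hasDerivAt_neg_mul (k := ω ^ 2) (by positivity)
    (fun t ht => (hφ t ht).sub (hasDerivAt_resonantSolution ω (φ 0) B C t))
    (fun t ht => by
      refine ((hφ' t ht).sub (hasDerivAt_resonantSolutionDeriv ω (φ 0) B C t)).congr_deriv ?_
      simp only [Pi.sub_apply]; ring)
    (by simp [resonantSolution])
    (by
      simp only [resonantSolutionDeriv, mul_zero, cos_zero, mul_one, sin_zero, sub_zero, B]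
      field_simp
      ring)
  exact ⟨fun t ht => sub_eq_zero.1 (h ht), fun t ht => sub_eq_zero.1 (h' ht)⟩

lemma integral_sin_pi_mul_resonantSolution (A B C : ℝ) :
    ∫ t in (0:ℝ)..1, sin (π * t) * resonantSolution π A B C t = B / 2 - C / (4 * π) := by
  have hπ : π ≠ 0 := pi_ne_zero
  have hG : ∀ t, HasDerivAt (fun t => A * sin (π * t) ^ 2 / (2 * π) +
      B * (t / 2 - sin (π * t) * cos (π * t) / (2 * π)) +
      C * (sin (π * t) * cos (π * t) / (4 * π ^ 2) -
        t * (cos (π * t) ^ 2 - sin (π * t) ^ 2) / (4 * π)))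
      (sin (π * t) * resonantSolution π A B C t) t := fun t => by
    have hs := hasDerivAt_sin_mul π t
    have hc := hasDerivAt_cos_mul π t
    have := ((((hs.fun_pow 2).const_mul A).div_const (2 * π)).add
      ((((hasDerivAt_id t).div_const 2).sub ((hs.mul hc).div_const (2 * π))).const_mul B)).add
      ((((hs.mul hc).div_const (4 * π ^ 2)).sub
        (((hasDerivAt_id t).mul ((hc.fun_pow 2).sub (hs.fun_pow 2))).div_const (4 * π))).const_mul
          C)
    refine this.congr_deriv ?_
    simp only [resonantSolution, id, Pi.sub_apply]
    field_simp
    linear_combination (-(4 * π * B)) * sin_sq_add_cos_sq (π * t)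
  rw [integral_eq_sub_of_hasDerivAt (fun t _ => hG t)
    (Continuous.intervalIntegrable (by unfold resonantSolution; fun_prop) _ _)]
  simp only [mul_one, mul_zero, sin_pi, cos_pi, sin_zero, cos_zero]
  field_simp
  ring

section MinKernel

variable {f : ℝ → ℝ}

/-- On `[0, 1]` this is `∫₀¹ min(t, s) f(s) ds`; written this way it is smooth on all of `ℝ`, with
second derivative `-f`. -/
noncomputable def minPotential (f : ℝ → ℝ) (t : ℝ) : ℝ :=
  (∫ s in (0:ℝ)..t, s * f s) + t * ∫ s in t..1, f s

lemma integral_min_mul_eq_minPotential (hf : Continuous f) {t : ℝ} (ht : t ∈ Icc (0:ℝ) 1) :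
    ∫ s in (0:ℝ)..1, min t s * f s = minPotential f t := by
  have hcont : Continuous fun s => min t s * f s := by fun_prop
  rw [← integral_add_adjacent_intervals (hcont.intervalIntegrable 0 t)
    (hcont.intervalIntegrable t 1), minPotential,
    ← integral_const_mul]
  congr 1 <;> refine integral_congr fun s hs => ?_
  · rw [uIcc_of_le ht.1] at hs
    simp only [min_eq_right hs.2]
  · rw [uIcc_of_le ht.2] at hs
    simp only [min_eq_left hs.1]

lemma hasDerivAt_integral_left_one (hf : Continuous f) (t : ℝ) :
    HasDerivAt (fun t => ∫ s in t..1, f s) (-f t) t :=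
  integral_hasDerivAt_left (hf.intervalIntegrable t 1) (hf.stronglyMeasurableAtFilter _ _)
    hf.continuousAt

lemma hasDerivAt_minPotential (hf : Continuous f) (t : ℝ) :
    HasDerivAt (minPotential f) (∫ s in t..1, f s) t := by
  refine (((continuous_id.mul hf).integral_hasStrictDerivAt 0 t).hasDerivAt.add
    ((hasDerivAt_id t).mul (hasDerivAt_integral_left_one hf t))).congr_deriv ?_
  simp only [id, Pi.mul_apply]
  ring

end MinKernel

lemma continuous_gZero : Continuous gZero := by
  unfold gZero
  fun_prop

lemma hasDerivAt_gZero (t : ℝ) : HasDerivAt gZero (√2 * cos (π * t)) t := by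
  refine ((hasDerivAt_sin_mul π t).const_mul (√2 / π)).congr_deriv ?_
  field_simp

lemma integral_RZero_mul {f : ℝ → ℝ} (hf : Continuous f) {t : ℝ} (ht : t ∈ Icc (0:ℝ) 1) :
    ∫ s in (0:ℝ)..1, RZero t s * f s =
      minPotential f t - gZero t * ∫ s in (0:ℝ)..1, gZero s * f s := by
  simp only [RZero, sub_mul, mul_assoc]
  rw [integral_sub, integral_const_mul, integral_min_mul_eq_minPotential hf ht]
  · exact (by fun_prop : Continuous fun s => min t s * f s).intervalIntegrable 0 1
  · exact (continuous_const.mul (continuous_gZero.mul hf)).intervalIntegrable 0 1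

theorem exists_eqOn_resonantSolution_of_integral_RZero_mul_eq {f : ℝ → ℝ} (hf : Continuous f)
    (heq : ∀ t ∈ Icc (0:ℝ) 1, ∫ s in (0:ℝ)..1, RZero t s * f s = 1 / π ^ 2 * f t) :
    ∃ B, π * B = -(√2 * π ^ 2 * (∫ s in (0:ℝ)..1, gZero s * f s) / 2) ∧
      EqOn f (resonantSolution π 0 B (π * B)) (Icc 0 1) := by
  have hπ : π ≠ 0 := pi_ne_zero
  set c := ∫ s in (0:ℝ)..1, gZero s * f s
  set C := -(√2 * π ^ 2 * c / 2) with hC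
  set φ := fun t => π ^ 2 * (minPotential f t - c * gZero t)
  set φ' := fun t => π ^ 2 * ((∫ s in t..1, f s) - c * (√2 * cos (π * t)))
  have hfφ : ∀ t ∈ Icc (0:ℝ) 1, f t = φ t := fun t ht => by
    have h : minPotential f t - gZero t * c = 1 / π ^ 2 * f t :=
      (integral_RZero_mul hf ht).symm.trans (heq t ht)
    simp only [φ]
    rw [mul_comm c, h]
    field_simp
  have hφ : ∀ t ∈ Icc (0:ℝ) 1, HasDerivAt φ (φ' t) t := fun t _ =>
    ((hasDerivAt_minPotential hf t).sub ((hasDerivAt_gZero t).const_mul c)).const_mul _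
  have hφ' : ∀ t ∈ Icc (0:ℝ) 1,
      HasDerivAt φ' (-(π ^ 2 * φ t) - 2 * π * C * sin (π * t)) t := fun t ht => by
    refine (((hasDerivAt_integral_left_one hf t).sub
      (((hasDerivAt_cos_mul π t).const_mul √2).const_mul c)).const_mul _).congr_deriv ?_
    rw [← hfφ t ht]
    ring
  obtain ⟨hsol, hsol'⟩ := eqOn_resonantSolution hπ hφ hφ'
  set B := (φ' 0 - C) / π
  have hφ0 : φ 0 = 0 := by simp [φ, minPotential, gZero]
  have hφ'1 : φ' 1 = √2 * π ^ 2 * c := by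
    simp only [integral_same, mul_one, cos_pi, φ']
    ring
  have hB : π * B = C := by
    have h1 := hsol' ⟨zero_le_one, le_rfl⟩
    simp only [resonantSolutionDeriv, hφ'1, mul_one, cos_pi, sin_pi] at h1
    linarith
  refine ⟨B, hB, fun t ht => ?_⟩
  rw [hfφ t ht, hsol ht, hφ0, hB]

theorem eqOn_zero_of_integral_RZero_mul_eq {f : ℝ → ℝ} (hf : Continuous f)
    (heq : ∀ t ∈ Icc (0:ℝ) 1, ∫ s in (0:ℝ)..1, RZero t s * f s = 1 / π ^ 2 * f t) :
    EqOn f 0 (Icc 0 1) := by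
  obtain ⟨B, hB, hfB⟩ := exists_eqOn_resonantSolution_of_integral_RZero_mul_eq hf heq
  have hc : ∫ s in (0:ℝ)..1, gZero s * f s = √2 / π * (B / 2 - π * B / (4 * π)) := by
    rw [← integral_sin_pi_mul_resonantSolution 0, ← integral_const_mul]
    refine integral_congr fun t ht => ?_
    rw [uIcc_of_le zero_le_one] at ht
    simp only [gZero, hfB ht]
    ring
  have hB0 : B = 0 := by
    have h2 : √2 ^ 2 = 2 := sq_sqrt zero_le_two
    rw [hc] at hB
    field_simp at hB
    rw [h2] at hB
    linarith
  intro t ht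
  simp [hfB ht, hB0, resonantSolution]

/-- `λ = 1/π²` is not an eigenvalue of the integral operator with kernel `R₀`. -/
theorem stmt13 :
    ¬ ∃ e : ℝ → ℝ, ContinuousOn e (Set.Icc 0 1) ∧
      (∃ t ∈ Set.Icc (0:ℝ) 1, e t ≠ 0) ∧
      ∀ t ∈ Set.Icc (0:ℝ) 1,
        (∫ s in (0:ℝ)..1, RZero t s * e s) = 1 / Real.pi ^ 2 * e t := by
  rintro ⟨e, he, ⟨t₀, ht₀, he₀⟩, heq⟩
  set f := IccExtend zero_le_one ((Icc (0:ℝ) 1).domRestrict e)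
  have hfe : EqOn f e (Icc 0 1) := fun t ht => IccExtend_of_mem _ _ ht
  have hf : Continuous f := continuous_IccExtend_iff.2 he.domRestrict
  refine he₀ (hfe ht₀ ▸ eqOn_zero_of_integral_RZero_mul_eq hf (fun t ht => ?_) ht₀)
  rw [hfe ht, ← heq t ht]
  exact integral_congr fun s hs => by rw [uIcc_of_le zero_le_one] at hs; rw [hfe hs]
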